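/- arXiv:2602.21949 — 4 statements merged into one kernel-verified Lean document; each statement's English description precedes it below -/
import Mathlib

section
/- Let K > 0, c > 0, and λ > 0 be real numbers. Then there exists a unique b > 0 satisfying K·(exp(c/b) − (c/b)·exp(c/b) − 1) + λ = 0. Moreover, denoting this solution by b(λ), the map λ ↦ b(λ) is strictly monotone decreasing on (0,∞). -/
private noncomputable def gfun : ℝ → ℝ := fun x => Real.exp x - x * Real.exp x - 1

private lemma gfun_anti : StrictAntiOn gfun (Set.Ici (0:ℝ)) := by
  apply strictAntiOn_of_deriv_neg (convex_Ici 0)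
  · exact (Real.continuous_exp.sub (continuous_id.mul Real.continuous_exp)).sub
      continuous_const |>.continuousOn
  · intro x hx
    rw [interior_Ici] at hx
    have h : HasDerivAt gfun (Real.exp x - (1 * Real.exp x + x * Real.exp x) - 0) x := by
      exact ((Real.hasDerivAt_exp x).sub
        ((hasDerivAt_id x).mul (Real.hasDerivAt_exp x))).sub (hasDerivAt_const x 1)
    rw [h.deriv]
    have := Real.exp_pos x
    nlinarith [hx.out]

private lemma gfun_exists (t : ℝ) (ht : t < 0) : ∃ x > 0, gfun x = t := by
  -- gfun 0 = 0, and gfun x ≤ 1 - x for x ≥ 1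
  set X : ℝ := max 1 (1 - t) with hX
  have hX1 : (1:ℝ) ≤ X := le_max_left _ _
  have hgX : gfun X ≤ t := by
    have hx1 : (1:ℝ) ≤ Real.exp X := by
      rw [← Real.exp_zero]; exact Real.exp_le_exp.mpr (by linarith)
    have h1 : gfun X ≤ 1 - X := by
      have : (1 - X) * Real.exp X ≤ (1 - X) * 1 := by
        apply mul_le_mul_of_nonpos_left hx1 (by linarith)
      simp only [gfun]; nlinarith
    have : 1 - X ≤ t := by
      have := le_max_right 1 (1 - t); linarith
    linarith
  have hg0 : gfun 0 = 0 := by simp [gfun]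
  have hcont : ContinuousOn gfun (Set.Icc 0 X) :=
    ((Real.continuous_exp.sub (continuous_id.mul Real.continuous_exp)).sub
      continuous_const).continuousOn
  have := intermediate_value_Icc' (by linarith : (0:ℝ) ≤ X) hcont
  have ht' : t ∈ Set.Icc (gfun X) (gfun 0) := ⟨hgX, by rw [hg0]; linarith⟩
  obtain ⟨x, hx, hxt⟩ := this ht'
  refine ⟨x, ?_, hxt⟩
  rcases lt_or_eq_of_le hx.1 with h | h
  · exact h
  · exfalso; rw [← h] at hxt; rw [hg0] at hxt; linarith

/-- For each multiplier λ > 0 the KKT stationarity equation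
K(e^{c/b} − (c/b)e^{c/b} − 1) + λ = 0 has a unique positive solution b(λ),
and λ ↦ b(λ) is strictly decreasing on (0,∞). -/
theorem stmt_7 (K c : ℝ) (hK : 0 < K) (hc : 0 < c) :
    (∀ lam : ℝ, 0 < lam →
      ∃! b : ℝ, 0 < b ∧
        K * (Real.exp (c / b) - c / b * Real.exp (c / b) - 1) + lam = 0) ∧
    ∀ bfun : ℝ → ℝ,
      (∀ lam : ℝ, 0 < lam → 0 < bfun lam ∧
        K * (Real.exp (c / bfun lam) - c / bfun lam * Real.exp (c / bfun lam) - 1)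
          + lam = 0) →
      StrictAntiOn bfun (Set.Ioi 0) := by
  have key : ∀ b lam : ℝ, 0 < b →
      (K * (Real.exp (c / b) - c / b * Real.exp (c / b) - 1) + lam = 0 ↔
        gfun (c / b) = -lam / K) := by
    intro b lam hb
    simp only [gfun]
    rw [eq_div_iff hK.ne']
    constructor <;> intro h <;> nlinarith [h]
  constructor
  · intro lam hlam
    have hneg : -lam / K < 0 := by
      have : 0 < lam / K := div_pos hlam hK
      rw [neg_div]; linarith
    obtain ⟨x, hx, hxt⟩ := gfun_exists (-lam / K) hneg
    refine ⟨c / x, ⟨div_pos hc hx, ?_⟩, ?_⟩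
    · rw [key _ _ (div_pos hc hx)]
      rw [div_div_cancel₀ (ne_of_gt hc)]  -- c / (c / x) = x
      exact hxt
    · rintro b' ⟨hb', heq'⟩
      rw [key _ _ hb'] at heq'
      have h1 : c / b' = x := by
        have hinj := gfun_anti.injOn
        have hxm : x ∈ Set.Ici (0:ℝ) := le_of_lt hx
        have hbm : c / b' ∈ Set.Ici (0:ℝ) := le_of_lt (div_pos hc hb')
        exact hinj hbm hxm (heq'.trans hxt.symm)
      field_simp at h1
      rw [h1]
      field_simp
  · intro bfun hbfun lam1 h1 lam2 h2 hlt
    obtain ⟨hb1, he1⟩ := hbfun lam1 h1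
    obtain ⟨hb2, he2⟩ := hbfun lam2 h2
    rw [key _ _ hb1] at he1
    rw [key _ _ hb2] at he2
    have hgl : gfun (c / bfun lam2) < gfun (c / bfun lam1) := by
      rw [he1, he2]
      have : lam1 / K < lam2 / K := div_lt_div_of_pos_right hlt hK
      rw [neg_div, neg_div]; linarith
    have hlt' : c / bfun lam1 < c / bfun lam2 := by
      have hbm1 : c / bfun lam1 ∈ Set.Ici (0:ℝ) := le_of_lt (div_pos hc hb1)
      have hbm2 : c / bfun lam2 ∈ Set.Ici (0:ℝ) := le_of_lt (div_pos hc hb2)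
      exact (gfun_anti.lt_iff_gt hbm2 hbm1).mp hgl
    exact (div_lt_div_iff_of_pos_left hc hb1 hb2).mp hlt'
end

section
/- Let c > 0 and L > 0 be real numbers. The function φ(b) = L / (b·log(1 + c/b)) is convex and strictly monotone decreasing on (0,∞). -/
open Set Real

section aux

variable {c : ℝ}

private lemma log_rw (hc : 0 < c) {b : ℝ} (hb : 0 < b) :
    Real.log (1 + c / b) = Real.log (b + c) - Real.log b := by
  have h1 : 1 + c / b = (b + c) / b := by field_simp
  rw [h1, Real.log_div (by positivity) (by positivity)]

private lemma f_pos (hc : 0 < c) {b : ℝ} (hb : 0 < b) :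
    0 < b * Real.log (1 + c / b) := by
  have : (1 : ℝ) < 1 + c / b := by
    have : 0 < c / b := by positivity
    linarith
  exact mul_pos hb (Real.log_pos this)

/-- F is the auxiliary rewriting of b ↦ b log(1+c/b). -/
private noncomputable def Faux (c : ℝ) : ℝ → ℝ := fun b => b * (Real.log (b + c) - Real.log b)

/-- First derivative of Faux. -/
private noncomputable def Gaux (c : ℝ) : ℝ → ℝ :=
  fun b => (Real.log (b + c) - Real.log b) + b * ((b + c)⁻¹ - b⁻¹)

private lemma hasDerivAt_Faux (hc : 0 < c) {b : ℝ} (hb : 0 < b) :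
    HasDerivAt (Faux c) (Gaux c b) b := by
  have hbc : b + c ≠ 0 := by positivity
  have h1 : HasDerivAt (fun x : ℝ => Real.log (x + c)) (1 / (b + c)) b := by
    simpa using (HasDerivAt.log ((hasDerivAt_id b).add_const c) hbc)
  have h2 : HasDerivAt Real.log (1 / b) b := by
    simpa using Real.hasDerivAt_log hb.ne'
  have := (hasDerivAt_id b).mul (h1.sub h2)
  simp only [one_mul, id_eq] at this
  refine this.congr_deriv ?_
  unfold Gaux
  simp only [Pi.sub_apply]
  ring

private lemma hasDerivAt_Gaux (hc : 0 < c) {b : ℝ} (hb : 0 < b) :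
    HasDerivAt (Gaux c)
      (2 * ((b + c)⁻¹ - b⁻¹) + b * (b⁻¹ ^ 2 - (b + c)⁻¹ ^ 2)) b := by
  have hbc : (b + c) ≠ 0 := by positivity
  have h1 : HasDerivAt (fun x : ℝ => Real.log (x + c)) (1 / (b + c)) b := by
    simpa using (HasDerivAt.log ((hasDerivAt_id b).add_const c) hbc)
  have h2 : HasDerivAt Real.log (1 / b) b := by
    simpa using Real.hasDerivAt_log hb.ne'
  have h3 : HasDerivAt (fun x : ℝ => (x + c)⁻¹) (-1 / (b + c) ^ 2) b := by
    have := ((hasDerivAt_id b).add_const c).inv hbc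
    exact this.congr_deriv (by simp)
  have h4 : HasDerivAt (fun x : ℝ => x⁻¹) (-1 / b ^ 2) b := by
    have := (hasDerivAt_id b).inv hb.ne'
    exact this.congr_deriv (by simp)
  have := (h1.sub h2).add ((hasDerivAt_id b).mul (h3.sub h4))
  refine this.congr_deriv ?_
  simp only [id, Pi.sub_apply]
  field_simp
  ring

private lemma Gaux_pos (hc : 0 < c) {b : ℝ} (hb : 0 < b) : 0 < Gaux c b := by
  have hbc : 0 < b + c := by positivity
  have hkey : Real.log (b / (b + c)) < b / (b + c) - 1 :=
    Real.log_lt_sub_one_of_pos (by positivity)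
      (by
        intro h
        have : b = b + c := by
          field_simp at h; linarith
        linarith)
  rw [Real.log_div hb.ne' hbc.ne'] at hkey
  have hG : Gaux c b = (Real.log (b + c) - Real.log b) - c / (b + c) := by
    have h5 : b * ((b + c)⁻¹ - b⁻¹) = -(c / (b + c)) := by
      field_simp
      ring
    unfold Gaux
    rw [h5]
    ring
  rw [hG]
  have h2 : b / (b + c) - 1 = -(c / (b + c)) := by field_simp; ring
  rw [h2] at hkey
  linarith

private lemma Gaux_deriv_neg (hc : 0 < c) {b : ℝ} (hb : 0 < b) :
    2 * ((b + c)⁻¹ - b⁻¹) + b * (b⁻¹ ^ 2 - (b + c)⁻¹ ^ 2) < 0 := by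
  have hbc : 0 < b + c := by positivity
  have : 2 * ((b + c)⁻¹ - b⁻¹) + b * (b⁻¹ ^ 2 - (b + c)⁻¹ ^ 2)
      = -(c ^ 2 / (b * (b + c) ^ 2)) := by
    field_simp
    ring
  rw [this]
  have : 0 < c ^ 2 / (b * (b + c) ^ 2) := by positivity
  linarith

private lemma Faux_concave (hc : 0 < c) : ConcaveOn ℝ (Ioi 0) (Faux c) := by
  have hI : interior (Ioi (0:ℝ)) = Ioi 0 := interior_Ioi
  refine concaveOn_of_hasDerivWithinAt2_nonpos (f' := Gaux c)
    (f'' := fun b => 2 * ((b + c)⁻¹ - b⁻¹) + b * (b⁻¹ ^ 2 - (b + c)⁻¹ ^ 2))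
    (convex_Ioi 0) ?_ ?_ ?_ ?_
  · exact fun b hb => (hasDerivAt_Faux hc hb).continuousAt.continuousWithinAt
  · intro b hb
    rw [hI] at hb ⊢
    exact (hasDerivAt_Faux hc hb).hasDerivWithinAt
  · intro b hb
    rw [hI] at hb ⊢
    exact (hasDerivAt_Gaux hc hb).hasDerivWithinAt
  · intro b hb
    rw [hI] at hb
    exact (Gaux_deriv_neg hc hb).le

private lemma Faux_strictMono (hc : 0 < c) : StrictMonoOn (Faux c) (Ioi 0) := by
  refine strictMonoOn_of_deriv_pos (convex_Ioi 0)
    (fun b hb => (hasDerivAt_Faux hc hb).continuousAt.continuousWithinAt) ?_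
  intro b hb
  rw [interior_Ioi] at hb
  rw [(hasDerivAt_Faux hc hb).deriv]
  exact Gaux_pos hc hb

private lemma Faux_eq (hc : 0 < c) {b : ℝ} (hb : 0 < b) :
    Faux c b = b * Real.log (1 + c / b) := by
  rw [log_rw hc hb]; rfl

end aux

/-- Lemma 2 of the paper: the per-user transmission time
φ(b) = L/(b·log(1 + c/b)) is convex and strictly decreasing on (0,∞). -/
theorem stmt_12 (c L : ℝ) (hc : 0 < c) (hL : 0 < L) :
    ConvexOn ℝ (Set.Ioi 0) (fun b : ℝ => L / (b * Real.log (1 + c / b))) ∧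
    StrictAntiOn (fun b : ℝ => L / (b * Real.log (1 + c / b))) (Set.Ioi 0) := by
  have hFpos : ∀ b ∈ Ioi (0:ℝ), 0 < Faux c b := fun b hb => by
    rw [Faux_eq hc hb]; exact f_pos hc hb
  have hconc := Faux_concave hc
  have hmono := Faux_strictMono hc
  constructor
  · refine ⟨convex_Ioi 0, ?_⟩
    intro x hx y hy a b ha hb hab
    simp only [smul_eq_mul]
    have hx' : (0:ℝ) < x := hx
    have hy' : (0:ℝ) < y := hy
    have hz : (0:ℝ) < a * x + b * y := by
      rcases ha.lt_or_eq with ha' | ha'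
      · have : 0 ≤ b * y := by positivity
        nlinarith
      · rw [← ha'] at hab; simp at hab
        rw [← ha']; simp; nlinarith
    have hu := hFpos x hx
    have hv := hFpos y hy
    have hw := hFpos _ (mem_Ioi.mpr hz)
    -- concavity: a • F x + b • F y ≤ F (a x + b y)
    have hcc := hconc.2 hx hy ha hb hab
    simp only [smul_eq_mul] at hcc
    have hauv : 0 < a * Faux c x + b * Faux c y := by
      rcases ha.lt_or_eq with ha' | ha'
      · have : 0 ≤ b * Faux c y := by positivity
        nlinarith
      · rw [← ha'] at hab; simp at hab
        rw [← ha']; simp; nlinarith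
    -- step 1: L / F(ax+by) ≤ L / (a F x + b F y)
    have step1 : L / Faux c (a * x + b * y) ≤ L / (a * Faux c x + b * Faux c y) :=
      div_le_div_of_nonneg_left hL.le hauv hcc
    -- step 2: convexity of inverse
    have hinv := (convexOn_zpow (𝕜 := ℝ) (-1)).2 (mem_Ioi.mpr hu) (mem_Ioi.mpr hv) ha hb hab
    simp only [smul_eq_mul, zpow_neg, zpow_one] at hinv
    have step2 : L / (a * Faux c x + b * Faux c y)
        ≤ a * (L / Faux c x) + b * (L / Faux c y) := by
      have := mul_le_mul_of_nonneg_left hinv hL.le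
      calc L / (a * Faux c x + b * Faux c y)
          = L * (a * Faux c x + b * Faux c y)⁻¹ := by rw [div_eq_mul_inv]
        _ ≤ L * (a * (Faux c x)⁻¹ + b * (Faux c y)⁻¹) := this
        _ = a * (L / Faux c x) + b * (L / Faux c y) := by
            rw [div_eq_mul_inv, div_eq_mul_inv]; ring
    calc L / ((a * x + b * y) * Real.log (1 + c / (a * x + b * y)))
        = L / Faux c (a * x + b * y) := by rw [Faux_eq hc hz]
      _ ≤ L / (a * Faux c x + b * Faux c y) := step1
      _ ≤ a * (L / Faux c x) + b * (L / Faux c y) := step2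
      _ = a * (L / (x * Real.log (1 + c / x))) + b * (L / (y * Real.log (1 + c / y))) := by
          rw [Faux_eq hc hx', Faux_eq hc hy']
  · intro x hx y hy hxy
    have hx' : (0:ℝ) < x := hx
    have hy' : (0:ℝ) < y := hy
    simp only
    rw [← Faux_eq hc hx', ← Faux_eq hc hy']
    exact div_lt_div_of_pos_left hL (hFpos x hx) (hmono hx hy hxy)
end

section
/- Let U be a finite index set and let T > 0, J > 0, B > 0, N0 > 0, and for each i ∈ U let A_i > 0 (computation cycles), f_i^max > 0, p_i^max > 0, g_i > 0, L_i > 0 (payload in bits). Define t_i^max = (T − A_i/f_i^max)/J and c_i = g_i·p_i^max/N0. (1) If t_i^max ≤ 0 for some i, then the set S = { (t,b,p,f) : ∀ i, A_i/f_i + J·t_i ≤ T ∧ t_i·b_i·log2(1 + g_i·p_i/(N0·b_i)) ≥ L_i ∧ 0 < p_i ≤ p_i^max ∧ 0 < f_i ≤ f_i^max ∧ b_i > 0 ∧ t_i > 0 ∧ ∑_j b_j ≤ B } is empty. (2) If t_i^max > 0 for all i and, for each i, b_i^min > 0 denotes the unique bandwidth satisfying t_i^max·b_i^min·log2(1 +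 c_i/b_i^min) = L_i (assumed to exist), then S is nonempty if and only if ∑_{i∈U} b_i^min ≤ B. -/
lemma log_gt_aux {x : ℝ} (hx : 0 < x) : x / (1 + x) < Real.log (1 + x) := by
  have h1 : (0:ℝ) < 1 + x := by linarith
  have h := Real.log_lt_sub_one_of_pos (x := (1+x)⁻¹) (by positivity)
    (by intro h; rw [inv_eq_one] at h; linarith)
  rw [Real.log_inv] at h
  have : (1+x)⁻¹ - 1 = -(x / (1+x)) := by field_simp; ring
  rw [this] at h; linarith

lemma F_strictMono {c : ℝ} (hc : 0 < c) :
    StrictMonoOn (fun b : ℝ => b * Real.log (1 + c / b)) (Set.Ioi 0) := by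
  have hderiv : ∀ x ∈ Set.Ioi (0:ℝ),
      HasDerivAt (fun b : ℝ => b * Real.log (1 + c / b))
        (1 * Real.log (1 + c / x) + x * (-(c * (x ^ 2)⁻¹) / (1 + c / x))) x := by
    intro x hx
    have hx0 : (0:ℝ) < x := hx
    have hpos : (0:ℝ) < 1 + c / x := by positivity
    have h1 : HasDerivAt (fun b : ℝ => c / b) (-(c * (x^2)⁻¹)) x := by
      simpa [div_eq_mul_inv, mul_neg] using (hasDerivAt_inv hx0.ne').const_mul c
    have h2 : HasDerivAt (fun b : ℝ => 1 + c / b) (-(c * (x^2)⁻¹)) x := by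
      simpa using h1.const_add 1
    have h3 := h2.log hpos.ne'
    exact (hasDerivAt_id x).mul h3
  apply strictMonoOn_of_deriv_pos (convex_Ioi 0)
  · intro x hx
    exact ((hderiv x hx).continuousAt).continuousWithinAt
  · intro x hx
    rw [interior_Ioi] at hx
    have hx0 : (0:ℝ) < x := hx
    rw [(hderiv x hx).deriv]
    have hpos : (0:ℝ) < 1 + c / x := by positivity
    have key := log_gt_aux (x := c / x) (by positivity)
    have : x * (-(c * (x ^ 2)⁻¹) / (1 + c / x)) = -((c / x) / (1 + c / x)) := by
      field_simp
    rw [this]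
    linarith

/-- Proposition 2 of the paper (feasibility certificate). With
t_i^max = (T − A_i/f_i^max)/J and c_i = g_i p_i^max/N₀:
(1) if some t_i^max ≤ 0, the constraint set of problem (A) is empty;
(2) if all t_i^max > 0 and b_i^min > 0 solves
t_i^max · b_i^min · log₂(1 + c_i/b_i^min) = L_i, then the constraint set is
nonempty iff ∑ b_i^min ≤ B. -/
theorem stmt_14 {ι : Type*} [Fintype ι]
    (T J B N0 : ℝ) (hT : 0 < T) (hJ : 0 < J) (hB : 0 < B) (hN0 : 0 < N0)
    (A fmax pmax g L : ι → ℝ)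
    (hA : ∀ i, 0 < A i) (hfmax : ∀ i, 0 < fmax i) (hpmax : ∀ i, 0 < pmax i)
    (hg : ∀ i, 0 < g i) (hL : ∀ i, 0 < L i)
    (tmax : ι → ℝ) (htmax : ∀ i, tmax i = (T - A i / fmax i) / J)
    (c : ι → ℝ) (hc : ∀ i, c i = g i * pmax i / N0) :
    ((∃ i, tmax i ≤ 0) →
      ¬ ∃ t b p f : ι → ℝ,
        (∀ i, A i / f i + J * t i ≤ T ∧
            t i * (b i * Real.logb 2 (1 + g i * p i / (N0 * b i))) ≥ L i ∧
            0 < p i ∧ p i ≤ pmax i ∧ 0 < f i ∧ f i ≤ fmax i ∧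
            0 < b i ∧ 0 < t i) ∧
          (∑ j, b j) ≤ B) ∧
    ((∀ i, 0 < tmax i) →
      ∀ bmin : ι → ℝ,
        (∀ i, 0 < bmin i ∧
          tmax i * (bmin i * Real.logb 2 (1 + c i / bmin i)) = L i) →
        ((∃ t b p f : ι → ℝ,
            (∀ i, A i / f i + J * t i ≤ T ∧
                t i * (b i * Real.logb 2 (1 + g i * p i / (N0 * b i))) ≥ L i ∧
                0 < p i ∧ p i ≤ pmax i ∧ 0 < f i ∧ f i ≤ fmax i ∧
                0 < b i ∧ 0 < t i) ∧
              (∑ j, b j) ≤ B) ↔ (∑ i, bmin i) ≤ B)) := by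
  have log2pos : (0:ℝ) < Real.log 2 := Real.log_pos one_lt_two
  constructor
  · rintro ⟨i, hi⟩ ⟨t, b, p, f, hfeas, hsum⟩
    obtain ⟨h1, h2, hp0, hple, hf0, hfle, hb0, ht0⟩ := hfeas i
    rw [htmax i, div_le_iff₀ hJ, zero_mul] at hi
    have hAf : A i / fmax i ≤ A i / f i :=
      div_le_div_of_nonneg_left (hA i).le hf0 hfle
    have hJt : 0 < J * t i := mul_pos hJ ht0
    linarith
  · intro htpos bmin hbmin
    constructor
    · rintro ⟨t, b, p, f, hfeas, hsum⟩
      have key : ∀ i, bmin i ≤ b i := by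
        intro i
        obtain ⟨h1, h2, hp0, hple, hf0, hfle, hb0, ht0⟩ := hfeas i
        have hci : 0 < c i := by
          rw [hc]; exact div_pos (mul_pos (hg i) (hpmax i)) hN0
        -- t i ≤ tmax i
        have hAf : A i / fmax i ≤ A i / f i :=
          div_le_div_of_nonneg_left (hA i).le hf0 hfle
        have htle : t i ≤ tmax i := by
          rw [htmax i, le_div_iff₀ hJ]
          nlinarith
        -- argument comparison
        have hratio : g i * p i / (N0 * b i) ≤ c i / b i := by
          rw [hc, div_div]
          gcongr
          exact (hg i).le
        have harg1 : (1:ℝ) ≤ 1 + g i * p i / (N0 * b i) := by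
          have : 0 ≤ g i * p i / (N0 * b i) :=
            (div_pos (mul_pos (hg i) hp0) (mul_pos hN0 hb0)).le
          linarith
        have hX0 : 0 ≤ Real.logb 2 (1 + g i * p i / (N0 * b i)) :=
          Real.logb_nonneg one_lt_two harg1
        have hXle : Real.logb 2 (1 + g i * p i / (N0 * b i)) ≤
            Real.logb 2 (1 + c i / b i) :=
          (Real.logb_le_logb one_lt_two (by linarith) (by linarith)).mpr
            (by linarith)
        have hchain : L i ≤ tmax i * (b i * Real.logb 2 (1 + c i / b i)) := by
          calc L i ≤ t i * (b i * Real.logb 2 (1 + g i * p i / (N0 * b i))) := h2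
            _ ≤ tmax i * (b i * Real.logb 2 (1 + c i / b i)) := by
                have h0 : 0 ≤ b i * Real.logb 2 (1 + g i * p i / (N0 * b i)) :=
                  mul_nonneg hb0.le hX0
                have s1 := mul_le_mul_of_nonneg_right htle h0
                have s2 : tmax i * (b i * Real.logb 2 (1 + g i * p i / (N0 * b i))) ≤
                    tmax i * (b i * Real.logb 2 (1 + c i / b i)) :=
                  mul_le_mul_of_nonneg_left
                    (mul_le_mul_of_nonneg_left hXle hb0.le) (htpos i).le
                linarith
        -- compare F values
        have hFle : bmin i * Real.log (1 + c i / bmin i) ≤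
            b i * Real.log (1 + c i / b i) := by
          have h : tmax i * (bmin i * Real.logb 2 (1 + c i / bmin i)) ≤
              tmax i * (b i * Real.logb 2 (1 + c i / b i)) := by
            rw [(hbmin i).2]; exact hchain
          have h' := (mul_le_mul_iff_right₀ (htpos i)).mp h
          rw [Real.logb, Real.logb, ← mul_div_assoc, ← mul_div_assoc,
            div_le_div_iff₀ log2pos log2pos] at h'
          exact le_of_mul_le_mul_right h' log2pos
        exact ((F_strictMono hci).le_iff_le (Set.mem_Ioi.mpr (hbmin i).1)
          (Set.mem_Ioi.mpr hb0)).mp hFle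
      calc (∑ i, bmin i) ≤ ∑ i, b i := Finset.sum_le_sum fun i _ => key i
        _ ≤ B := hsum
    · intro hsum
      refine ⟨tmax, bmin, pmax, fmax, fun i => ?_, hsum⟩
      refine ⟨?_, ?_, hpmax i, le_refl _, hfmax i, le_refl _, (hbmin i).1, htpos i⟩
      · rw [htmax i, mul_div_cancel₀ _ hJ.ne']
        linarith
      · have harg : g i * pmax i / (N0 * bmin i) = c i / bmin i := by
          rw [hc, div_div]
        rw [harg]
        exact (hbmin i).2.ge
end

section
/- Let U be a finite index set and let T > 0, J > 0, B > 0, N0 > 0, and for each i ∈ U let A_i > 0, f_i^max > 0, p_i^max > 0, g_i > 0, L_i > 0. Define t_i^max = (T − A_i/f_i^max)/J and c_i = g_i·p_i^max/N0, and assume t_i^max > 0 for all i. Let b_i^min > 0 satisfy t_i^max·b_i^min·log2(1 + c_i/b_i^min) = L_i, and let b : U → ℝ satisfy b_i ≥ b_i^min for all i and ∑_i b_i ≤ B. Define p_i = p_i^max, t_i = L_i/(b_i·log2(1 + c_i/b_i)), and f_i = A_i/(T − J·t_i). Then for every i: (i) t_i·b_i·log2(1 + g_i·p_i/(N0·b_i))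 = L_i; (ii) t_i ≤ t_i^max; (iii) 0 < f_i ≤ f_i^max and A_i/f_i + J·t_i = T; so the tuple (t, b, p, f) is feasible for problem (A). -/
private lemma key_mono {c : ℝ} (hc : 0 < c) {x y : ℝ} (hx : 0 < x) (hxy : x ≤ y) :
    x * Real.log (1 + c / x) ≤ y * Real.log (1 + c / y) := by
  set F : ℝ → ℝ := fun z => z * (Real.log (z + c) - Real.log z) with hF
  have hagree : ∀ z : ℝ, 0 < z → z * Real.log (1 + c / z) = F z := by
    intro z hz
    have h1 : 1 + c / z = (z + c) / z := by field_simp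
    rw [h1, Real.log_div (by positivity) hz.ne']
  have hderiv : ∀ z : ℝ, 0 < z → HasDerivAt F
      ((Real.log (z + c) - Real.log z) + z * ((z + c)⁻¹ - z⁻¹)) z := by
    intro z hz
    have h1 : HasDerivAt (fun w : ℝ => Real.log (w + c)) ((z + c)⁻¹) z := by
      simpa [Function.comp_def] using (Real.hasDerivAt_log (by positivity : z + c ≠ 0)).comp z
        ((hasDerivAt_id z).add_const c)
    have h2 : HasDerivAt Real.log z⁻¹ z := Real.hasDerivAt_log hz.ne'
    have := (hasDerivAt_id z).mul (h1.sub h2)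
    simpa [hF, one_mul, Pi.mul_def, Pi.sub_def] using this
  have hmono : MonotoneOn F (Set.Ioi 0) := by
    apply monotoneOn_of_deriv_nonneg (convex_Ioi 0)
    · intro z hz
      exact (hderiv z hz).continuousAt.continuousWithinAt
    · intro z hz
      rw [interior_Ioi] at hz
      exact (hderiv z hz).differentiableAt.differentiableWithinAt
    · intro z hz
      rw [interior_Ioi] at hz
      have hz : (0:ℝ) < z := hz
      rw [(hderiv z hz).deriv]
      have hlog : Real.log (z / (z + c)) ≤ z / (z + c) - 1 :=
        Real.log_le_sub_one_of_pos (by positivity)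
      rw [Real.log_div hz.ne' (by positivity)] at hlog
      have heq : z * ((z + c)⁻¹ - z⁻¹) = z / (z + c) - 1 := by
        field_simp
      rw [heq]
      linarith
  rw [hagree x hx, hagree y (lt_of_lt_of_le hx hxy)]
  exact hmono (Set.mem_Ioi.2 hx) (Set.mem_Ioi.2 (lt_of_lt_of_le hx hxy)) hxy

private lemma key_mono_logb {c : ℝ} (hc : 0 < c) {x y : ℝ} (hx : 0 < x) (hxy : x ≤ y) :
    x * Real.logb 2 (1 + c / x) ≤ y * Real.logb 2 (1 + c / y) := by
  have h2 : (0:ℝ) < Real.log 2 := Real.log_pos (by norm_num)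
  simp only [Real.logb, ← mul_div_assoc]
  exact (div_le_div_iff_of_pos_right h2).2 (key_mono hc hx hxy)

/-- Proposition 3 of the paper: given bandwidths b_i ≥ b_i^min with ∑ b_i ≤ B,
the initialization p_i = p_i^max, t_i = L_i/(b_i log₂(1 + c_i/b_i)),
f_i = A_i/(T − J t_i) meets the rate constraint with equality, satisfies
t_i ≤ t_i^max, 0 < f_i ≤ f_i^max, and the completion-time constraint with
equality; hence it is feasible for problem (A). -/
theorem stmt_15 {ι : Type*} [Fintype ι]
    (T J B N0 : ℝ) (hT : 0 < T) (hJ : 0 < J) (hB : 0 < B) (hN0 : 0 < N0)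
    (A fmax pmax g L : ι → ℝ)
    (hA : ∀ i, 0 < A i) (hfmax : ∀ i, 0 < fmax i) (hpmax : ∀ i, 0 < pmax i)
    (hg : ∀ i, 0 < g i) (hL : ∀ i, 0 < L i)
    (tmax : ι → ℝ) (htmax : ∀ i, tmax i = (T - A i / fmax i) / J)
    (htmaxpos : ∀ i, 0 < tmax i)
    (c : ι → ℝ) (hc : ∀ i, c i = g i * pmax i / N0)
    (bmin : ι → ℝ) (hbminpos : ∀ i, 0 < bmin i)
    (hbmin : ∀ i, tmax i * (bmin i * Real.logb 2 (1 + c i / bmin i)) = L i)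
    (b : ι → ℝ) (hb : ∀ i, bmin i ≤ b i) (hbB : (∑ i, b i) ≤ B)
    (p t f : ι → ℝ)
    (hp : ∀ i, p i = pmax i)
    (ht : ∀ i, t i = L i / (b i * Real.logb 2 (1 + c i / b i)))
    (hf : ∀ i, f i = A i / (T - J * t i)) :
    ∀ i, t i * (b i * Real.logb 2 (1 + g i * p i / (N0 * b i))) = L i ∧
      t i ≤ tmax i ∧
      (0 < f i ∧ f i ≤ fmax i) ∧
      A i / f i + J * t i = T := by
  intro i
  have hci : 0 < c i := by rw [hc i]; exact div_pos (mul_pos (hg i) (hpmax i)) hN0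
  have hbi : 0 < b i := lt_of_lt_of_le (hbminpos i) (hb i)
  -- R(bmin) positive
  have hRmin : 0 < bmin i * Real.logb 2 (1 + c i / bmin i) := by
    have := hbmin i
    nlinarith [hL i, htmaxpos i, mul_pos (htmaxpos i) (htmaxpos i)]
  -- monotonicity
  have hmono : bmin i * Real.logb 2 (1 + c i / bmin i)
      ≤ b i * Real.logb 2 (1 + c i / b i) :=
    key_mono_logb hci (hbminpos i) (hb i)
  have hRb : 0 < b i * Real.logb 2 (1 + c i / b i) := lt_of_lt_of_le hRmin hmono
  have hti : t i = L i / (b i * Real.logb 2 (1 + c i / b i)) := ht i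
  have htipos : 0 < t i := hti ▸ div_pos (hL i) hRb
  -- argument equality
  have harg : g i * p i / (N0 * b i) = c i / b i := by
    rw [hp i, hc i]; field_simp
  constructor
  · rw [harg, hti, div_mul_cancel₀ _ hRb.ne']
  have htmaxi : tmax i = L i / (bmin i * Real.logb 2 (1 + c i / bmin i)) := by
    rw [eq_div_iff hRmin.ne']; exact hbmin i
  have htle : t i ≤ tmax i := by
    rw [hti, htmaxi]
    exact div_le_div_of_nonneg_left (hL i).le hRmin hmono
  refine ⟨htle, ?_, ?_⟩
  · -- f bounds
    have hJt : J * tmax i = T - A i / fmax i := by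
      rw [htmax i]; field_simp
    have hTJt : A i / fmax i ≤ T - J * t i := by
      have : J * t i ≤ J * tmax i := mul_le_mul_of_nonneg_left htle hJ.le
      linarith
    have hTJtpos : 0 < T - J * t i :=
      lt_of_lt_of_le (div_pos (hA i) (hfmax i)) hTJt
    have hfi : f i = A i / (T - J * t i) := hf i
    constructor
    · rw [hfi]; exact div_pos (hA i) hTJtpos
    · rw [hfi, div_le_iff₀ hTJtpos]
      rw [div_le_iff₀ (hfmax i)] at hTJt
      nlinarith [hfmax i]
  · have hJt : J * tmax i = T - A i / fmax i := by
      rw [htmax i]; field_simp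
    have hTJt : A i / fmax i ≤ T - J * t i := by
      have : J * t i ≤ J * tmax i := mul_le_mul_of_nonneg_left htle hJ.le
      linarith
    have hTJtpos : 0 < T - J * t i :=
      lt_of_lt_of_le (div_pos (hA i) (hfmax i)) hTJt
    have hAf : A i / f i = T - J * t i := by
      rw [hf i, div_div_eq_mul_div, mul_comm, mul_div_assoc,
        div_self (hA i).ne', mul_one]
    rw [hAf]; ring
end
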